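/- Fix n ≥ 1, τ_x > 0, τ_y > 0, and set γ = τ_x/(τ_x+τ_y). Let G be an n×n real matrix with nonnegative entries, zero diagonal, and row sums d_i^out = Σ_{j≠i} G i j < 1, let c = (I − γ·G)⁻¹ 𝟙, set b_i = (1−γ)·c_i, and let d_i^in = Σ_{j≠i} G j i denote in-degrees. Let ε_1, …, ε_n, ε_0 be jointly independent square-integrable real random variables with mean zero, Var(ε_i) = 1/τ_x for 1 ≤ i ≤ n and Var(ε_0) = 1/τ_y, and define X_i = (1−b_i)·ε_i + b_i·ε_0. Define ΔW = Σ_{i=1}^{n} ( E[−(1−d_i^out)·X_i² − Σ_{j≠i} G i j·(X_i − X_j)²] + τ_x⁻¹(1 + d_i^out) ). Then ΔW < 0 if and only if Σ_{i=1}^{n} c_i·( (1 − d_i^in)·c_i + 2·d_i^in ) < 0. -/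

import Mathlib

open Matrix Finset MeasureTheory ProbabilityTheory

/-!
The shocks are independent with mean zero, so every expected loss is the sum of the squared
loadings on the shocks weighted by their variances `τx⁻¹`, `τy⁻¹`; this makes `ΔW` an explicit
quadratic polynomial in the weights `b`. Summing the bilateral losses over the network turns the
out-links of `i` into the in-degrees of the agents `j`, and the Katz–Bonacich equation
`c = 𝟙 + γ G c` eliminates `G b`. What remains is
`ΔW = τy / (τx (τx + τy)) · Σ_i c_i ((1 - d_i^in) c_i + 2 d_i^in)`, with a positive prefactor.
-/

section KatzBonacich

variable {ι : Type*} [Fintype ι] [DecidableEq ι]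

theorem det_one_sub_smul_ne_zero {G : Matrix ι ι ℝ} {γ : ℝ} (hγ0 : 0 ≤ γ) (hγ1 : γ ≤ 1)
    (hpos : ∀ i j, 0 ≤ G i j) (hdiag : ∀ i, G i i = 0)
    (hrow : ∀ i, ∑ j ∈ univ.erase i, G i j < 1) : (1 - γ • G).det ≠ 0 := by
  refine det_ne_zero_of_sum_row_lt_diag fun k => ?_
  have hoff : ∀ j ∈ univ.erase k, ‖(1 - γ • G) k j‖ = γ * G k j := fun j hj => by
    rw [Matrix.sub_apply, one_apply_ne (ne_of_mem_erase hj).symm, Matrix.smul_apply, smul_eq_mul,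
      zero_sub, norm_neg, Real.norm_of_nonneg (mul_nonneg hγ0 (hpos k j))]
  calc ∑ j ∈ univ.erase k, ‖(1 - γ • G) k j‖ = γ * ∑ j ∈ univ.erase k, G k j := by
        rw [sum_congr rfl hoff, mul_sum]
    _ ≤ ∑ j ∈ univ.erase k, G k j := mul_le_of_le_one_left (sum_nonneg fun j _ => hpos k j) hγ1
    _ < 1 := hrow k
    _ = ‖(1 - γ • G) k k‖ := by simp [hdiag k]

theorem inv_one_sub_mulVec_eq_add {R : Type*} [CommRing R] {A : Matrix ι ι R}
    (hA : IsUnit (1 - A).det) (v : ι → R) :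
    (1 - A)⁻¹ *ᵥ v = v + A *ᵥ ((1 - A)⁻¹ *ᵥ v) := by
  have h : (1 - A) *ᵥ ((1 - A)⁻¹ *ᵥ v) = v := by
    rw [mulVec_mulVec, mul_nonsing_inv _ hA, one_mulVec]
  rw [sub_mulVec, one_mulVec] at h
  exact eq_add_of_sub_eq h

theorem katz_bonacich_eq {G : Matrix ι ι ℝ} {γ : ℝ} (hdiag : ∀ i, G i i = 0)
    (hdet : (1 - γ • G).det ≠ 0) {c : ι → ℝ} (hc : c = (1 - γ • G)⁻¹ *ᵥ fun _ => 1) (i : ι) :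
    γ * ∑ j ∈ univ.erase i, G i j * c j = c i - 1 := by
  have h := congrFun (inv_one_sub_mulVec_eq_add (isUnit_iff_ne_zero.mpr hdet) fun _ => 1) i
  rw [← hc, smul_mulVec, Pi.add_apply, Pi.smul_apply, smul_eq_mul, mulVec, dotProduct,
    ← sum_erase _ (by rw [hdiag i, zero_mul])] at h
  linarith

end KatzBonacich

section SecondMoments

variable {Ω κ : Type*} [MeasurableSpace Ω] {μ : Measure Ω} [IsFiniteMeasure μ]
  {ε : κ → Ω → ℝ}

theorem integral_sq_sum_const_mul_of_iIndepFun (hindep : iIndepFun ε μ)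
    (hL2 : ∀ k, MemLp (ε k) 2 μ) (hmean : ∀ k, ∫ ω, ε k ω ∂μ = 0) (s : Finset κ) (a : κ → ℝ) :
    ∫ ω, (∑ k ∈ s, a k * ε k ω) ^ 2 ∂μ = ∑ k ∈ s, a k ^ 2 * variance (ε k) μ := by
  have hY : ∀ k, MemLp (fun ω => a k * ε k ω) 2 μ := fun k => (hL2 k).const_mul (a k)
  have hsum : (fun ω => ∑ k ∈ s, a k * ε k ω) = ∑ k ∈ s, fun ω => a k * ε k ω := by
    ext; simp
  have hsum_mean : ∫ ω, ∑ k ∈ s, a k * ε k ω ∂μ = 0 := by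
    rw [integral_finsetSum _ fun k _ => (hY k).integrable one_le_two]
    simp [integral_const_mul, hmean]
  have hsum_meas : AEMeasurable (fun ω => ∑ k ∈ s, a k * ε k ω) μ :=
    hsum ▸ (memLp_finsetSum' s fun k _ => hY k).aemeasurable
  rw [← variance_of_integral_eq_zero hsum_meas hsum_mean, hsum,
    IndepFun.variance_sum (fun k _ => hY k) fun k _ l _ hkl =>
      (hindep.indepFun hkl).comp (measurable_const_mul _) (measurable_const_mul _)]
  simp [variance_const_mul]

theorem integral_sq_add_of_iIndepFun (hindep : iIndepFun ε μ) (hL2 : ∀ k, MemLp (ε k) 2 μ)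
    (hmean : ∀ k, ∫ ω, ε k ω ∂μ = 0) {k l : κ} (hkl : k ≠ l) (α β : ℝ) :
    ∫ ω, (α * ε k ω + β * ε l ω) ^ 2 ∂μ = α ^ 2 * variance (ε k) μ + β ^ 2 * variance (ε l) μ := by
  classical
  simpa [sum_pair hkl, hkl.symm] using
    integral_sq_sum_const_mul_of_iIndepFun hindep hL2 hmean {k, l} fun m => if m = k then α else β

theorem integral_sq_add_add_of_iIndepFun (hindep : iIndepFun ε μ)
    (hL2 : ∀ k, MemLp (ε k) 2 μ) (hmean : ∀ k, ∫ ω, ε k ω ∂μ = 0) {k l m : κ} (hkl : k ≠ l)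
    (hkm : k ≠ m) (hlm : l ≠ m) (α β δ : ℝ) :
    ∫ ω, (α * ε k ω + β * ε l ω + δ * ε m ω) ^ 2 ∂μ =
      α ^ 2 * variance (ε k) μ + β ^ 2 * variance (ε l) μ + δ ^ 2 * variance (ε m) μ := by
  classical
  simpa [sum_insert, sum_pair hlm, hkl, hkm, hlm, hkl.symm, hkm.symm, hlm.symm, add_assoc] using
    integral_sq_sum_const_mul_of_iIndepFun hindep hL2 hmean {k, l, m}
      fun x => if x = k then α else if x = l then β else δ

end SecondMoments

section Welfare

variable {ι : Type*} [Fintype ι] [DecidableEq ι]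

theorem integral_welfare_eq {Ω : Type*} [MeasurableSpace Ω] {μ : Measure Ω} [IsFiniteMeasure μ]
    {ε : Option ι → Ω → ℝ} (hindep : iIndepFun ε μ) (hL2 : ∀ k, MemLp (ε k) 2 μ)
    (hmean : ∀ k, ∫ ω, ε k ω ∂μ = 0) {p q : ℝ} (hvarx : ∀ i, variance (ε (some i)) μ = p)
    (hvary : variance (ε none) μ = q) {b : ι → ℝ} {X : ι → Ω → ℝ}
    (hX : ∀ i ω, X i ω = (1 - b i) * ε (some i) ω + b i * ε none ω)
    (G : Matrix ι ι ℝ) (a : ℝ) (i : ι) :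
    ∫ ω, (a * X i ω ^ 2 - ∑ j ∈ univ.erase i, G i j * (X i ω - X j ω) ^ 2) ∂μ =
      a * ((1 - b i) ^ 2 * p + b i ^ 2 * q) -
        ∑ j ∈ univ.erase i,
          G i j * (((1 - b i) ^ 2 + (1 - b j) ^ 2) * p + (b i - b j) ^ 2 * q) := by
  have hXL2 : ∀ i, MemLp (X i) 2 μ := fun i => by
    rw [show X i = _ from funext (hX i)]
    exact ((hL2 (some i)).const_mul _).add ((hL2 none).const_mul _)
  have hsq : ∫ ω, X i ω ^ 2 ∂μ = (1 - b i) ^ 2 * p + b i ^ 2 * q := by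
    simp_rw [hX i]
    rw [integral_sq_add_of_iIndepFun hindep hL2 hmean (Option.some_ne_none i), hvarx, hvary]
  have hsq_sub : ∀ j ∈ univ.erase i, ∫ ω, (X i ω - X j ω) ^ 2 ∂μ =
      ((1 - b i) ^ 2 + (1 - b j) ^ 2) * p + (b i - b j) ^ 2 * q := fun j hj => by
    have hij : some i ≠ some j := Option.some_injective _ |>.ne (ne_of_mem_erase hj).symm
    have h := integral_sq_add_add_of_iIndepFun hindep hL2 hmean hij (Option.some_ne_none i)
      (Option.some_ne_none j) (1 - b i) (-(1 - b j)) (b i - b j)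
    rw [hvarx, hvarx, hvary] at h
    simp_rw [hX i, hX j]
    convert h using 3 <;> ring
  have hint_sub : ∀ j, Integrable (fun ω => G i j * (X i ω - X j ω) ^ 2) μ := fun j =>
    ((hXL2 i).sub (hXL2 j)).integrable_sq.const_mul _
  rw [integral_sub ((hXL2 i).integrable_sq.const_mul a)
      (integrable_finsetSum _ fun j _ => hint_sub j), integral_const_mul, hsq,
    integral_finsetSum _ fun j _ => hint_sub j]
  congr 1
  exact sum_congr rfl fun j hj => by rw [integral_const_mul, hsq_sub j hj]

theorem sum_welfare_eq_in_degree (G : Matrix ι ι ℝ) (b : ι → ℝ) (p q : ℝ) :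
    ∑ i, (-(1 - ∑ j ∈ univ.erase i, G i j) * ((1 - b i) ^ 2 * p + b i ^ 2 * q) -
        ∑ j ∈ univ.erase i, G i j * (((1 - b i) ^ 2 + (1 - b j) ^ 2) * p + (b i - b j) ^ 2 * q) +
        p * (1 + ∑ j ∈ univ.erase i, G i j)) =
      ∑ i, ((1 + ∑ j ∈ univ.erase i, G j i) * (2 * p * b i - (p + q) * b i ^ 2) +
        2 * q * b i * ∑ j ∈ univ.erase i, G i j * b j) := by
  -- `e x = p - ((1 - x) ^ 2 * p + x ^ 2 * q)`: own loss saved by weight `x` on the public signal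
  set e : ℝ → ℝ := fun x => 2 * p * x - (p + q) * x ^ 2
  have hterm : ∀ i, ∑ j ∈ univ.erase i, G i j *
      (((1 - b i) ^ 2 + (1 - b j) ^ 2) * p + (b i - b j) ^ 2 * q) =
        (∑ j ∈ univ.erase i, G i j) * ((1 - b i) ^ 2 * p + b i ^ 2 * q + p) -
          ∑ j ∈ univ.erase i, G i j * e (b j) - 2 * q * b i * ∑ j ∈ univ.erase i, G i j * b j := by
    intro i
    simp only [sum_mul, mul_sum, ← sum_sub_distrib]
    exact sum_congr rfl fun j _ => by ring
  have hswap : ∑ i, ∑ j ∈ univ.erase i, G i j * e (b j) =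
      ∑ i, (∑ j ∈ univ.erase i, G j i) * e (b i) := by
    simp only [sum_mul]
    exact sum_comm' fun i j => by simp [ne_comm]
  calc _ = ∑ i, (e (b i) + ∑ j ∈ univ.erase i, G i j * e (b j) +
        2 * q * b i * ∑ j ∈ univ.erase i, G i j * b j) :=
        sum_congr rfl fun i _ => by rw [hterm i]; ring
    _ = ∑ i, (e (b i) + (∑ j ∈ univ.erase i, G j i) * e (b i) +
        2 * q * b i * ∑ j ∈ univ.erase i, G i j * b j) := by
        simp only [sum_add_distrib, hswap]
    _ = _ := sum_congr rfl fun i _ => by ring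

theorem welfare_term_eq_of_katz_bonacich {τx τy γ : ℝ} (hτx : 0 < τx) (hτy : 0 < τy)
    (hγ : γ = τx / (τx + τy)) (G : Matrix ι ι ℝ) {c b : ι → ℝ} (hb : ∀ i, b i = (1 - γ) * c i)
    {i : ι} (hc : γ * ∑ j ∈ univ.erase i, G i j * c j = c i - 1) (d : ℝ) :
    (1 + d) * (2 * τx⁻¹ * b i - (τx⁻¹ + τy⁻¹) * b i ^ 2) +
        2 * τy⁻¹ * b i * ∑ j ∈ univ.erase i, G i j * b j =
      τy / (τx * (τx + τy)) * (c i * ((1 - d) * c i + 2 * d)) := by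
  have hγ0 : γ ≠ 0 := by rw [hγ]; positivity
  have hGb : ∑ j ∈ univ.erase i, G i j * b j = (1 - γ) * ((c i - 1) / γ) := by
    rw [← eq_div_of_mul_eq hγ0 (by rw [mul_comm, hc]), mul_sum]
    exact sum_congr rfl fun j _ => by rw [hb j]; ring
  rw [hGb, hb i, hγ]
  field_simp
  ring

end Welfare

theorem stmt6_general (n : ℕ) (τx τy : ℝ) (hτx : 0 < τx) (hτy : 0 < τy)
    (γ : ℝ) (hγ : γ = τx / (τx + τy))
    (G : Matrix (Fin n) (Fin n) ℝ)
    (hposG : ∀ i j, 0 ≤ G i j) (hdiag : ∀ i, G i i = 0)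
    (hrow : ∀ i, ∑ j ∈ Finset.univ.erase i, G i j < 1)
    (c : Fin n → ℝ) (hc : c = (1 - γ • G)⁻¹ *ᵥ fun _ => 1)
    (b : Fin n → ℝ) (hb : ∀ i, b i = (1 - γ) * c i)
    (din : Fin n → ℝ) (hdin : ∀ i, din i = ∑ j ∈ Finset.univ.erase i, G j i)
    {Ω : Type*} [MeasurableSpace Ω] (μ : Measure Ω) [IsProbabilityMeasure μ]
    (ε : Option (Fin n) → Ω → ℝ)
    (hindep : iIndepFun ε μ)
    (hL2 : ∀ k, MemLp (ε k) 2 μ)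
    (hmean : ∀ k, ∫ ω, ε k ω ∂μ = 0)
    (hvarx : ∀ i : Fin n, variance (ε (some i)) μ = 1 / τx)
    (hvary : variance (ε none) μ = 1 / τy)
    (X : Fin n → Ω → ℝ)
    (hX : ∀ i ω, X i ω = (1 - b i) * ε (some i) ω + b i * ε none ω)
    (ΔW : ℝ)
    (hΔW : ΔW = ∑ i, ((∫ ω, (-(1 - ∑ j ∈ Finset.univ.erase i, G i j) * (X i ω) ^ 2
          - ∑ j ∈ Finset.univ.erase i, G i j * (X i ω - X j ω) ^ 2) ∂μ)
        + τx⁻¹ * (1 + ∑ j ∈ Finset.univ.erase i, G i j))) :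
    ΔW < 0 ↔ ∑ i, c i * ((1 - din i) * c i + 2 * din i) < 0 := by
  have hγ0 : 0 ≤ γ := by rw [hγ]; positivity
  have hγ1 : γ ≤ 1 := by rw [hγ, div_le_one (by positivity)]; linarith
  have hkatz := katz_bonacich_eq hdiag (det_one_sub_smul_ne_zero hγ0 hγ1 hposG hdiag hrow) hc
  have hK : 0 < τy / (τx * (τx + τy)) := by positivity
  have hΔW' : ΔW = τy / (τx * (τx + τy)) * ∑ i, c i * ((1 - din i) * c i + 2 * din i) := by
    simp_rw [hΔW, integral_welfare_eq hindep hL2 hmean (fun i => (hvarx i).trans (one_div τx))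
      (hvary.trans (one_div τy)) hX]
    rw [sum_welfare_eq_in_degree, mul_sum univ _ (τy / (τx * (τx + τy)))]
    exact sum_congr rfl fun i _ =>
      hdin i ▸ welfare_term_eq_of_katz_bonacich hτx hτy hγ G hb (hkatz i) _
  rw [hΔW']
  exact smul_neg_iff_of_pos_left hK

/-- Public information provision lowers aggregate welfare (`ΔW < 0`)
if and only if `Σ_i c_i ((1 - d_i^in) c_i + 2 d_i^in) < 0`. -/
theorem stmt6 (n : ℕ) (hn : 1 ≤ n) (τx τy : ℝ) (hτx : 0 < τx) (hτy : 0 < τy)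
    (γ : ℝ) (hγ : γ = τx / (τx + τy))
    (G : Matrix (Fin n) (Fin n) ℝ)
    (hposG : ∀ i j, 0 ≤ G i j) (hdiag : ∀ i, G i i = 0)
    (hrow : ∀ i, ∑ j ∈ Finset.univ.erase i, G i j < 1)
    (c : Fin n → ℝ) (hc : c = (1 - γ • G)⁻¹ *ᵥ fun _ => 1)
    (b : Fin n → ℝ) (hb : ∀ i, b i = (1 - γ) * c i)
    (din : Fin n → ℝ) (hdin : ∀ i, din i = ∑ j ∈ Finset.univ.erase i, G j i)
    {Ω : Type*} [MeasurableSpace Ω] (μ : Measure Ω) [IsProbabilityMeasure μ]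
    (ε : Option (Fin n) → Ω → ℝ)
    (hindep : iIndepFun ε μ)
    (hL2 : ∀ k, MemLp (ε k) 2 μ)
    (hmean : ∀ k, ∫ ω, ε k ω ∂μ = 0)
    (hvarx : ∀ i : Fin n, variance (ε (some i)) μ = 1 / τx)
    (hvary : variance (ε none) μ = 1 / τy)
    (X : Fin n → Ω → ℝ)
    (hX : ∀ i ω, X i ω = (1 - b i) * ε (some i) ω + b i * ε none ω)
    (ΔW : ℝ)
    (hΔW : ΔW = ∑ i, ((∫ ω, (-(1 - ∑ j ∈ Finset.univ.erase i, G i j) * (X i ω) ^ 2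
          - ∑ j ∈ Finset.univ.erase i, G i j * (X i ω - X j ω) ^ 2) ∂μ)
        + τx⁻¹ * (1 + ∑ j ∈ Finset.univ.erase i, G i j))) :
    ΔW < 0 ↔ ∑ i, c i * ((1 - din i) * c i + 2 * din i) < 0 :=
  stmt6_general n τx τy hτx hτy γ hγ G hposG hdiag hrow c hc b hb din hdin μ ε hindep hL2 hmean
    hvarx hvary X hX ΔW hΔW
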